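/- Let m be an integer and let s be an integer with 0 ≤ s ≤ m−2 such that m+s is even and m+s ≥ 6, and let f : F_q → F_2 (q = 2^m) be an s-plateaued Boolean function with f(0) = 0. Then the extended binary code C̄_f' is an LCD code (C̄_f' ∩ (C̄_f')^⊥ = {0}) of length 2^m + m + 2 and dimension m + 2. Moreover, if f is balanced (W_f(0) = 0), then the minimum distance of C̄_f' is at least 2^{m−1} − 2^{(m+s−2)/2} + 2. -/

import Mathlib

open Finset

noncomputable section

/-- ζ_p = exp(2πi/p). -/
def zetaP (p : ℕ) : ℂ := Complex.exp (2 * Real.pi * Complex.I / p)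

/-- ζ_p^a for a ∈ F_p. -/
def eChar (p : ℕ) (a : ZMod p) : ℂ := zetaP p ^ a.val

/-- Walsh transform of f : F_q → F_p : W_f(β) = Σ_x ζ_p^{f(x) − Tr(βx)}. -/
def walsh (p : ℕ) (F : Type) [Field F] [Fintype F] [Algebra (ZMod p) F]
    (f : F → ZMod p) (β : F) : ℂ :=
  ∑ x : F, eChar p (f x - Algebra.trace (ZMod p) F (β * x))

/-- √p* = √p if p ≡ 1 (mod 4), and i√p if p ≡ 3 (mod 4). -/
def sqrtPStar (p : ℕ) : ℂ :=
  if p % 4 = 1 then ((Real.sqrt p : ℝ) : ℂ) else Complex.I * ((Real.sqrt p : ℝ) : ℂ)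

/-- f is s-plateaued: |W_f(β)|² ∈ {0, p^{m+s}} for all β. -/
def IsPlateaued (p m s : ℕ) (F : Type) [Field F] [Fintype F] [Algebra (ZMod p) F]
    (f : F → ZMod p) : Prop :=
  ∀ β : F, Complex.normSq (walsh p F f β) = 0 ∨
    Complex.normSq (walsh p F f β) = (p : ℝ) ^ (m + s)

/-- Walsh support S_f = {β : |W_f(β)|² = p^{m+s}}. -/
def walshSupp (p m s : ℕ) (F : Type) [Field F] [Fintype F] [Algebra (ZMod p) F]
    (f : F → ZMod p) : Set F :=
  {β : F | Complex.normSq (walsh p F f β) = (p : ℝ) ^ (m + s)}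

/-- f is weakly regular s-plateaued with sign ε and dual function f^*. -/
def IsWeaklyRegularPlateaued (p m s : ℕ) (F : Type) [Field F] [Fintype F]
    [Algebra (ZMod p) F] (f : F → ZMod p) (ε : ℤ) (fstar : F → ZMod p) : Prop :=
  IsPlateaued p m s F f ∧ (ε = 1 ∨ ε = -1) ∧
  (∀ β : F, β ∉ walshSupp p m s F f → fstar β = 0) ∧
  (∀ β ∈ walshSupp p m s F f,
    walsh p F f β = (ε : ℂ) * sqrtPStar p ^ (m + s) * eChar p (fstar β))

/-- Walsh transform of a Boolean function, with values in ℤ. -/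
def walsh2 (F : Type) [Field F] [Fintype F] [Algebra (ZMod 2) F]
    (f : F → ZMod 2) (β : F) : ℤ :=
  ∑ x : F, (-1 : ℤ) ^ ((f x + Algebra.trace (ZMod 2) F (β * x)).val)

/-- A Boolean function is s-plateaued: W_f(β)² ∈ {0, 2^{m+s}} for all β. -/
def IsPlateaued2 (m s : ℕ) (F : Type) [Field F] [Fintype F] [Algebra (ZMod 2) F]
    (f : F → ZMod 2) : Prop :=
  ∀ β : F, walsh2 F f β ^ 2 = 0 ∨ walsh2 F f β ^ 2 = 2 ^ (m + s)

/-- Hamming weight. -/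
def wtH {n : Type} [Fintype n] {K : Type} [Zero K] [DecidableEq K] (v : n → K) : ℕ :=
  (Finset.univ.filter (fun i => v i ≠ 0)).card

/-- A code S has minimum distance d. -/
def hasMinDist {n : Type} [Fintype n] {K : Type} [Zero K] [DecidableEq K]
    (S : Set (n → K)) (d : ℕ) : Prop :=
  (∃ v ∈ S, v ≠ 0 ∧ wtH v = d) ∧ ∀ v ∈ S, v ≠ 0 → d ≤ wtH v

/-- The dual code of a set of vectors. -/
def dualCode {n : Type} [Fintype n] {K : Type} [Field K] (S : Set (n → K)) :
    Submodule K (n → K) where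
  carrier := {u : n → K | ∀ v ∈ S, ∑ i, u i * v i = 0}
  add_mem' := by
    intro u w hu hw v hv
    have h1 := hu v hv
    have h2 := hw v hv
    simp only [Pi.add_apply, add_mul, Finset.sum_add_distrib, h1, h2, add_zero]
  zero_mem' := by
    intro v hv
    simp
  smul_mem' := by
    intro c u hu v hv
    have h1 := hu v hv
    simp only [Pi.smul_apply, smul_eq_mul, mul_assoc, ← Finset.mul_sum, h1, mul_zero]

/-- The code C̄_f = {(a f(x) + Tr(bx) + c)_{x ∈ F_q}}. -/
def codeCbar (p : ℕ) (F : Type) [Field F] [Fintype F] [Algebra (ZMod p) F]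
    (f : F → ZMod p) : Set (F → ZMod p) :=
  {v : F → ZMod p | ∃ a c : ZMod p, ∃ b : F,
    v = fun x => a * f x + Algebra.trace (ZMod p) F (b * x) + c}

/-- The extended code C̄_f' ⊆ F_p^{m+2+q}: all vectors
(c, a, a_0, …, a_{m−1}, (a f(x) + Tr(bx) + a + c)_{x ∈ F_q}) with b = Σ a_i α^i. -/
def extCode (p m : ℕ) (F : Type) [Field F] [Fintype F] [Algebra (ZMod p) F]
    (f : F → ZMod p) (α : F) : Set (Fin (m + 2) ⊕ F → ZMod p) :=
  {v | ∃ c a : ZMod p, ∃ aa : Fin m → ZMod p,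
    v = Sum.elim (Fin.cons c (Fin.cons a aa))
      (fun x => a * f x +
        Algebra.trace (ZMod p) F ((∑ i : Fin m, aa i • α ^ (i : ℕ)) * x) + a + c)}

/-- The punctured code C_f^* indexed by the nonzero elements of F_q. -/
def codeCstar (p : ℕ) (F : Type) [Field F] [Fintype F] [Algebra (ZMod p) F]
    (f : F → ZMod p) : Set ({x : F // x ≠ 0} → ZMod p) :=
  {v | ∃ a : ZMod p, ∃ b : F,
    v = fun x => a * f x.val + Algebra.trace (ZMod p) F (b * x.val)}

end

/-!
Write `m + s = 2t`; then `t ≥ 3`, and every Walsh value of `f` is `0` or `±2^t`. Hence `8` divides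
`q = 2^m` and every sign sum `∑ₓ (-1)^{g x}` over `g ∈ C̄_f`, and the identity
`4·#{g = h = 1} = q - ∑(-1)^g - ∑(-1)^h + ∑(-1)^{g+h}` shows that `C̄_f` is self-orthogonal.
A word of `C̄_f'` has the form `(u, T u)` with `u ∈ F₂^{m+2}` arbitrary and `T u ∈ C̄_f`, so the inner
product of two words is that of their prefixes, which forces `C̄_f' ∩ C̄_f'^⊥ = 0`.
For the weight bound, `2·wt(g) = q - ∑(-1)^g` and `|W_f(b)| ≤ 2^t`; the linear independence of
`1, α, …, α^{m-1}` guarantees that `b = 0` only when the prefix is supported on `(c, a)`.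
-/

open Finset

def signSum {n : Type} [Fintype n] (g : n → ZMod 2) : ℤ := ∑ x, (-1 : ℤ) ^ (g x).val

lemma zmod_two_eq_zero_or_eq_one (u : ZMod 2) : u = 0 ∨ u = 1 := by
  revert u; decide

lemma neg_one_pow_zmod_two_val_add (u v : ZMod 2) :
    (-1 : ℤ) ^ (u + v).val = (-1) ^ u.val * (-1) ^ v.val := by
  revert u v; decide

lemma signSum_add_const {n : Type} [Fintype n] (g : n → ZMod 2) (c : ZMod 2) :
    signSum (fun x => g x + c) = (-1) ^ c.val * signSum g := by
  simp only [signSum, neg_one_pow_zmod_two_val_add, mul_sum, mul_comm]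

lemma two_mul_wtH_eq_card_sub_signSum {n : Type} [Fintype n] (g : n → ZMod 2) :
    2 * (wtH g : ℤ) = Fintype.card n - signSum g := by
  have key : ∀ u : ZMod 2, (-1 : ℤ) ^ u.val = 1 - 2 * if u ≠ 0 then 1 else 0 := by decide
  simp only [signSum, wtH, key, sum_sub_distrib, ← mul_sum, sum_boole, sum_const, card_univ]
  simp

lemma sum_mul_eq_zero_of_eight_dvd_signSum {n : Type} [Fintype n] (g h : n → ZMod 2)
    (hn : 8 ∣ (Fintype.card n : ℤ)) (hg : 8 ∣ signSum g) (hh : 8 ∣ signSum h)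
    (hgh : 8 ∣ signSum (g + h)) :
    ∑ x, g x * h x = 0 := by
  have key : ∀ u v : ZMod 2,
      4 * ((u * v).val : ℤ) = 1 - (-1) ^ u.val - (-1) ^ v.val + (-1) ^ (u + v).val := by
    decide
  have h4 : 4 * ((∑ x, (g x * h x).val : ℕ) : ℤ)
      = Fintype.card n - signSum g - signSum h + signSum (g + h) := by
    simp only [Nat.cast_sum, mul_sum, key, signSum, Pi.add_apply, sum_add_distrib,
      sum_sub_distrib, sum_const, card_univ, nsmul_eq_mul, mul_one]
  have heven : 2 ∣ ∑ x, (g x * h x).val := by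
    have : (8 : ℤ) ∣ 4 * ((∑ x, (g x * h x).val : ℕ) : ℤ) := by
      rw [h4]; exact ((hn.sub hg).sub hh).add hgh
    obtain ⟨k, hk⟩ := this
    have : (2 : ℤ) ∣ ((∑ x, (g x * h x).val : ℕ) : ℤ) := ⟨k, by linarith⟩
    exact_mod_cast this
  have hcast : ((∑ x, (g x * h x).val : ℕ) : ZMod 2) = ∑ x, g x * h x := by
    push_cast; simp only [ZMod.natCast_val, ZMod.cast_id', id]
  rw [← hcast, (ZMod.natCast_eq_zero_iff _ 2).mpr heven]

section BooleanFunction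

variable {F : Type} [Field F] [Fintype F] [Algebra (ZMod 2) F]

lemma signSum_trace_mul_eq_zero {b : F} (hb : b ≠ 0) :
    signSum (fun x => Algebra.trace (ZMod 2) F (b * x)) = 0 := by
  obtain ⟨y, hy⟩ := Algebra.trace_surjective (ZMod 2) F 1
  have hflip : ∀ x, (-1 : ℤ) ^ (Algebra.trace (ZMod 2) F (b * (x + b⁻¹ * y))).val
      = -(-1) ^ (Algebra.trace (ZMod 2) F (b * x)).val := by
    intro x
    rw [mul_add, ← mul_assoc, mul_inv_cancel₀ hb, one_mul, map_add, hy,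
      neg_one_pow_zmod_two_val_add]
    simp [ZMod.val_one]
  have hshift := Equiv.sum_comp (Equiv.addRight (b⁻¹ * y))
    (fun x => (-1 : ℤ) ^ (Algebra.trace (ZMod 2) F (b * x)).val)
  simp only [Equiv.coe_addRight, hflip, sum_neg_distrib] at hshift
  unfold signSum
  linarith

lemma IsPlateaued2.walsh2_eq_zero_or_abs_eq {m s t : ℕ} {f : F → ZMod 2}
    (hpl : IsPlateaued2 m s F f) (ht : m + s = t + t) (β : F) :
    walsh2 F f β = 0 ∨ |walsh2 F f β| = 2 ^ t := by
  rcases hpl β with h | h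
  · exact .inl (pow_eq_zero_iff two_ne_zero |>.mp h)
  · rw [ht, pow_add, ← sq, sq_eq_sq_iff_abs_eq_abs, abs_pow, abs_two] at h
    exact .inr h

lemma signSum_codeword (f : F → ZMod 2) (a c : ZMod 2) (b : F) :
    signSum (fun x => a * f x + Algebra.trace (ZMod 2) F (b * x) + c)
      = (-1) ^ c.val * if a = 0 then signSum (fun x => Algebra.trace (ZMod 2) F (b * x))
          else walsh2 F f b := by
  rw [signSum_add_const (fun x => a * f x + Algebra.trace (ZMod 2) F (b * x))]
  congr 1
  rcases zmod_two_eq_zero_or_eq_one a with rfl | rfl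
  · simp
  · simp [signSum, walsh2]

variable {f : F → ZMod 2}

lemma add_mem_codeCbar {g h : F → ZMod 2} (hg : g ∈ codeCbar 2 F f)
    (hh : h ∈ codeCbar 2 F f) : g + h ∈ codeCbar 2 F f := by
  obtain ⟨a, c, b, rfl⟩ := hg
  obtain ⟨a', c', b', rfl⟩ := hh
  refine ⟨a + a', c + c', b + b', funext fun x => ?_⟩
  simp only [Pi.add_apply, add_mul, map_add]
  ring

lemma eight_dvd_signSum_of_mem_codeCbar (hq : 8 ∣ (Fintype.card F : ℤ))
    (hW : ∀ b, 8 ∣ walsh2 F f b) {g : F → ZMod 2} (hg : g ∈ codeCbar 2 F f) :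
    8 ∣ signSum g := by
  obtain ⟨a, c, b, rfl⟩ := hg
  rw [signSum_codeword]
  refine Dvd.dvd.mul_left ?_ _
  split_ifs
  · by_cases hb : b = 0
    · simpa [hb, signSum] using hq
    · simp [signSum_trace_mul_eq_zero hb]
  · exact hW b

lemma sum_mul_eq_zero_of_mem_codeCbar (hq : 8 ∣ (Fintype.card F : ℤ))
    (hW : ∀ b, 8 ∣ walsh2 F f b) {g h : F → ZMod 2} (hg : g ∈ codeCbar 2 F f)
    (hh : h ∈ codeCbar 2 F f) : ∑ x, g x * h x = 0 :=
  sum_mul_eq_zero_of_eight_dvd_signSum g h hq (eight_dvd_signSum_of_mem_codeCbar hq hW hg)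
    (eight_dvd_signSum_of_mem_codeCbar hq hW hh)
    (eight_dvd_signSum_of_mem_codeCbar hq hW (add_mem_codeCbar hg hh))

end BooleanFunction

lemma linearIndependent_pow_of_forall_eq_pow {K F : Type} [Field K] [Fintype K] [Field F]
    [Fintype F] [Algebra K F] {m : ℕ} (hcard : Fintype.card F = Fintype.card K ^ m) {α : F}
    (hα : ∀ x : F, x ≠ 0 → ∃ k : ℕ, x = α ^ k) :
    LinearIndependent K (fun i : Fin m => α ^ (i : ℕ)) := by
  have : Module.Finite K F := Module.Finite.of_finite
  have hfinrank : Module.finrank K F = m := by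
    rw [Module.card_eq_pow_finrank (K := K) (V := F)] at hcard
    exact Nat.pow_right_injective Fintype.one_lt_card hcard
  have htop : IntermediateField.adjoin K {α} = ⊤ := by
    refine eq_top_iff.mpr fun x _ => ?_
    by_cases hx : x = 0
    · exact hx ▸ zero_mem _
    · obtain ⟨k, rfl⟩ := hα x hx
      exact pow_mem (IntermediateField.mem_adjoin_simple_self K α) k
  have hdeg : (minpoly K α).natDegree = m := by
    rw [← IntermediateField.adjoin.finrank (Algebra.IsIntegral.isIntegral α), htop,
      IntermediateField.finrank_top', hfinrank]
  exact hdeg ▸ linearIndependent_pow α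

lemma wtH_sum_elim {ι κ K : Type} [Fintype ι] [Fintype κ] [Zero K] [DecidableEq K]
    (u : ι → K) (v : κ → K) : wtH (Sum.elim u v) = wtH u + wtH v := by
  unfold wtH
  rw [card_filter, card_filter, card_filter, Fintype.sum_sum_type]
  rfl

lemma two_le_wtH {ι K : Type} [Fintype ι] [Zero K] [DecidableEq K] {u : ι → K} {i j : ι}
    (hij : i ≠ j) (hi : u i ≠ 0) (hj : u j ≠ 0) : 2 ≤ wtH u := by
  classical
  calc 2 = ({i, j} : Finset ι).card := (card_pair hij).symm
    _ ≤ wtH u := card_le_card fun k hk => by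
      rcases mem_insert.mp hk with rfl | hk
      · simpa using hi
      · simpa [mem_singleton.mp hk] using hj

lemma ncard_range_sumElim {ι κ K : Type} [Fintype ι] (T : (ι → K) → κ → K) :
    (Set.range fun u => Sum.elim u (T u)).ncard = Nat.card K ^ Fintype.card ι := by
  rw [Set.ncard_range_of_injective fun u w h => funext fun i => congrFun h (Sum.inl i),
    Nat.card_fun, Nat.card_eq_fintype_card (α := ι)]

section GraphCode

variable {ι κ K : Type} [Fintype ι] [Fintype κ] [Field K]

lemma inter_dualCode_range_sumElim [DecidableEq ι] (T : (ι → K) → κ → K) (hT0 : T 0 = 0)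
    (hT : ∀ u w, ∑ x, T u x * T w x = 0) :
    Set.range (fun u => Sum.elim u (T u)) ∩
      (dualCode (Set.range fun u => Sum.elim u (T u)) : Set (ι ⊕ κ → K)) = {0} := by
  have hzero : Sum.elim (0 : ι → K) (T 0) = 0 := by
    rw [hT0]; exact Sum.elim_zero_zero
  ext v
  constructor
  · rintro ⟨⟨u, rfl⟩, hv⟩
    suffices u = 0 by subst this; exact hzero
    funext i
    have hvi := hv _ ⟨Pi.single i 1, rfl⟩
    simpa [Fintype.sum_sum_type, hT, Pi.single_apply] using hvi
  · rintro rfl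
    exact ⟨⟨0, hzero⟩, Submodule.zero_mem _⟩

end GraphCode

section ExtendedCode

variable {m : ℕ} {F : Type} [Field F] [Algebra (ZMod 2) F] (f : F → ZMod 2) (α : F)

/-- The last `q` coordinates of the word of `C̄_f'` with prefix `u = (c, a, a₀, …, a_{m-1})`. -/
noncomputable def extTail (u : Fin (m + 2) → ZMod 2) (x : F) : ZMod 2 :=
  u 1 * f x + Algebra.trace (ZMod 2) F ((∑ i : Fin m, u i.succ.succ • α ^ (i : ℕ)) * x)
    + u 1 + u 0

lemma extTail_zero : extTail f α (0 : Fin (m + 2) → ZMod 2) = 0 := by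
  funext x; simp [extTail]

variable [Fintype F]

lemma extCode_eq_range :
    extCode 2 m F f α = Set.range fun u => Sum.elim u (extTail f α u) := by
  ext v
  constructor
  · rintro ⟨c, a, aa, rfl⟩
    exact ⟨Fin.cons c (Fin.cons a aa), rfl⟩
  · rintro ⟨u, rfl⟩
    refine ⟨u 0, u 1, fun i => u i.succ.succ, ?_⟩
    have hu : (Fin.cons (u 0) (Fin.cons (u 1) fun i => u i.succ.succ) : Fin (m + 2) → ZMod 2)
        = u :=
      funext fun i => Fin.cases rfl (fun j => Fin.cases rfl (fun _ => rfl) j) i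
    rw [hu]
    rfl

lemma extTail_mem_codeCbar (u : Fin (m + 2) → ZMod 2) : extTail f α u ∈ codeCbar 2 F f :=
  ⟨u 1, u 1 + u 0, _, funext fun x => by simp only [extTail]; ring⟩

end ExtendedCode

section MinimumDistance

variable {m t : ℕ} {F : Type} [Field F] [Fintype F] [Algebra (ZMod 2) F] {f : F → ZMod 2}
  {α : F}

lemma signSum_extTail_le (hcard : Fintype.card F = 2 ^ m)
    (hα : ∀ x : F, x ≠ 0 → ∃ k : ℕ, x = α ^ k) (hbal : walsh2 F f 0 = 0)
    (hW : ∀ b, |walsh2 F f b| ≤ 2 ^ t) {u : Fin (m + 2) → ZMod 2} (hu : u ≠ 0) :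
    signSum (extTail f α u) ≤ 0 ∨ (2 ≤ wtH u ∧ signSum (extTail f α u) ≤ 2 ^ t) := by
  set b := ∑ i : Fin m, u i.succ.succ • α ^ (i : ℕ) with hb_def
  have hli : LinearIndependent (ZMod 2) fun i : Fin m => α ^ (i : ℕ) :=
    linearIndependent_pow_of_forall_eq_pow (by rw [ZMod.card, hcard]) hα
  have hb : b = 0 ↔ ∀ i : Fin m, u i.succ.succ = 0 :=
    ⟨Fintype.linearIndependent_iff.mp hli _, fun h => by simp [hb_def, h]⟩
  have hsign : signSum (extTail f α u) = (-1) ^ (u 1 + u 0).val *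
      if u 1 = 0 then signSum (fun x => Algebra.trace (ZMod 2) F (b * x))
      else walsh2 F f b := by
    rw [← signSum_codeword]
    exact congrArg signSum (funext fun x => add_assoc _ _ _)
  rcases zmod_two_eq_zero_or_eq_one (u 1) with h1 | h1
  · left
    rw [hsign, if_pos h1]
    by_cases hb0 : b = 0
    · have h0 : u 0 = 1 := by
        refine (zmod_two_eq_zero_or_eq_one (u 0)).resolve_left fun h0 => hu ?_
        exact funext fun i => Fin.cases h0 (fun j => Fin.cases h1 (hb.mp hb0) j) i
      simp [signSum, hb0, h0, h1, ZMod.val_one]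
    · rw [signSum_trace_mul_eq_zero hb0, mul_zero]
  · have h1' : u 1 ≠ 0 := by simp [h1]
    rw [hsign, if_neg h1']
    by_cases hb0 : b = 0
    · left
      rw [hb0, hbal, mul_zero]
    · right
      obtain ⟨j, hj⟩ : ∃ j : Fin m, u j.succ.succ ≠ 0 := by simpa [hb] using hb0
      refine ⟨two_le_wtH (by simp [Fin.ext_iff]) h1' hj, ?_⟩
      refine le_trans ?_ (hW b)
      rcases neg_one_pow_eq_or ℤ (u 1 + u 0).val with h | h <;> rw [h]
      · simp [le_abs_self]
      · simp [neg_le_abs]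

lemma le_two_mul_wtH_sumElim_extTail (hcard : Fintype.card F = 2 ^ m)
    (hα : ∀ x : F, x ≠ 0 → ∃ k : ℕ, x = α ^ k) (hbal : walsh2 F f 0 = 0)
    (hW : ∀ b, |walsh2 F f b| ≤ 2 ^ t) (ht : 1 ≤ t) {u : Fin (m + 2) → ZMod 2} (hu : u ≠ 0) :
    2 ^ m + 4 ≤ 2 * wtH (Sum.elim u (extTail f α u)) + 2 ^ t := by
  have hu_pos : 1 ≤ wtH u := hammingNorm_pos_iff.mpr hu
  have htail := two_mul_wtH_eq_card_sub_signSum (extTail f α u)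
  have h2t : 2 ≤ 2 ^ t := Nat.le_self_pow (by omega) 2
  rw [hcard] at htail
  rw [wtH_sum_elim]
  push_cast at htail
  zify at hu_pos h2t ⊢
  rcases signSum_extTail_le hcard hα hbal hW hu with h | ⟨hu2, h⟩
  · linarith
  · zify at hu2
    linarith

end MinimumDistance

theorem statement14_general (m s : ℕ) (hs : s ≤ m - 2) (hpar : Even (m + s)) (hms : 6 ≤ m + s)
    (F : Type) [Field F] [Fintype F] [Algebra (ZMod 2) F]
    (hcard : Fintype.card F = 2 ^ m)
    (α : F) (hα : ∀ x : F, x ≠ 0 → ∃ k : ℕ, x = α ^ k)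
    (f : F → ZMod 2) (hpl : IsPlateaued2 m s F f) :
    extCode 2 m F f α ∩ (dualCode (extCode 2 m F f α) : Set (Fin (m + 2) ⊕ F → ZMod 2))
      = {0} ∧
    Fintype.card (Fin (m + 2) ⊕ F) = 2 ^ m + m + 2 ∧
    Set.ncard (extCode 2 m F f α) = 2 ^ (m + 2) ∧
    (walsh2 F f 0 = 0 → ∀ v ∈ extCode 2 m F f α, v ≠ 0 →
      2 ^ (m - 1) - 2 ^ ((m + s - 2) / 2) + 2 ≤ wtH v) := by
  obtain ⟨t, ht⟩ := hpar
  have hW := hpl.walsh2_eq_zero_or_abs_eq ht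
  have hq8 : (8 : ℤ) ∣ Fintype.card F := by
    rw [hcard]; exact_mod_cast pow_dvd_pow 2 (by omega : 3 ≤ m)
  have hW8 (b : F) : (8 : ℤ) ∣ walsh2 F f b := by
    rcases hW b with h | h
    · simp [h]
    · rw [← dvd_abs, h]
      exact dvd_trans (by norm_num) (pow_dvd_pow 2 (by omega : 3 ≤ t))
  rw [extCode_eq_range]
  refine ⟨inter_dualCode_range_sumElim _ (extTail_zero f α) fun u w =>
      sum_mul_eq_zero_of_mem_codeCbar hq8 hW8 (extTail_mem_codeCbar f α u)
        (extTail_mem_codeCbar f α w),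
    by simp [hcard]; ring, by simp [ncard_range_sumElim], ?_⟩
  rintro hbal _ ⟨u, rfl⟩ hv
  dsimp only at hv ⊢
  have hu : u ≠ 0 := by rintro rfl; simp [extTail_zero] at hv
  have hWle (b : F) : |walsh2 F f b| ≤ 2 ^ t := by rcases hW b with h | h <;> simp [h]
  have key := le_two_mul_wtH_sumElim_extTail hcard hα hbal hWle (by omega) hu
  rw [show (m + s - 2) / 2 = t - 1 by omega]
  rw [← Nat.two_pow_pred_mul_two (by omega : 0 < m),
    ← Nat.two_pow_pred_mul_two (by omega : 0 < t)] at key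
  have := Nat.pow_le_pow_right two_pos (by omega : t - 1 ≤ m - 1)
  omega

theorem statement14 (m s : ℕ) (hs : s ≤ m - 2) (hpar : Even (m + s)) (hms : 6 ≤ m + s)
    (F : Type) [Field F] [Fintype F] [Algebra (ZMod 2) F]
    (hcard : Fintype.card F = 2 ^ m)
    (α : F) (hα : ∀ x : F, x ≠ 0 → ∃ k : ℕ, x = α ^ k)
    (f : F → ZMod 2) (hf0 : f 0 = 0) (hpl : IsPlateaued2 m s F f) :
    extCode 2 m F f α ∩ (dualCode (extCode 2 m F f α) : Set (Fin (m + 2) ⊕ F → ZMod 2))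
      = {0} ∧
    Fintype.card (Fin (m + 2) ⊕ F) = 2 ^ m + m + 2 ∧
    Set.ncard (extCode 2 m F f α) = 2 ^ (m + 2) ∧
    (walsh2 F f 0 = 0 → ∀ v ∈ extCode 2 m F f α, v ≠ 0 →
      2 ^ (m - 1) - 2 ^ ((m + s - 2) / 2) + 2 ≤ wtH v) :=
  statement14_general m s hs hpar hms F hcard α hα f hpl
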